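/- arXiv:1401.4522 — 2 statements merged into one kernel-verified Lean document; each statement's English description precedes it below -/
import Mathlib

section
/- For integers n ≥ 2 and m ≥ 1, the join K_{1,n} + K̄_m is super edge-magic if and only if m = 1. -/
open SimpleGraph

/-- A super edge-magic labeling of `G` with magic constant `k`: a bijection from
vertices and edges onto `{1, …, p+q}` sending vertices onto `{1, …, p}`, with
`f x + f (xy) + f y = k` for every edge `xy`. -/
def IsSEMWith {V : Type*} [Fintype V] (G : SimpleGraph V) (k : ℕ) : Prop :=
  ∃ (f : V → ℕ) (g : G.edgeSet → ℕ),
    Function.Injective (Sum.elim f g) ∧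
    Set.range (Sum.elim f g) = Set.Icc 1 (Fintype.card V + G.edgeSet.ncard) ∧
    Set.range f = Set.Icc 1 (Fintype.card V) ∧
    ∀ (x y : V) (h : G.Adj x y), f x + g ⟨s(x, y), G.mem_edgeSet.mpr h⟩ + f y = k

/-- `G` is super edge-magic. -/
def IsSEM {V : Type*} [Fintype V] (G : SimpleGraph V) : Prop :=
  ∃ k : ℕ, IsSEMWith G k

/-- The graph `G ∪ t K₁`: `G` together with `t` added isolated vertices. -/
def unionIsolated {V : Type*} (G : SimpleGraph V) (t : ℕ) : SimpleGraph (V ⊕ Fin t) :=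
  G.map Function.Embedding.inl

/-- The super edge-magic deficiency `μₛ(G)`: the least `t` such that `G ∪ t K₁`
is super edge-magic, or `⊤` if there is no such `t`. -/
noncomputable def semDeficiency {V : Type*} [Fintype V] (G : SimpleGraph V) : ℕ∞ :=
  sInf ((fun t : ℕ => (t : ℕ∞)) '' {t : ℕ | IsSEM (unionIsolated G t)})

/-- `H n`: the wheel `W_n` (hub `0`, rim `1, …, n`) minus the spoke `{0, 1}`. -/
def wheelMinusSpoke (n : ℕ) : SimpleGraph (Fin (n + 1)) :=
  SimpleGraph.fromRel (fun i j =>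
    ((i : ℕ) = 0 ∧ 2 ≤ (j : ℕ)) ∨
    ((j : ℕ) = (i : ℕ) + 1 ∧ 1 ≤ (i : ℕ)) ∨
    ((i : ℕ) = n ∧ (j : ℕ) = 1))

/-- The join `P_n + K̄_m`: a path `u_1 … u_n` plus `m` vertices joined to every `u_i`. -/
def pathJoin (n m : ℕ) : SimpleGraph (Fin n ⊕ Fin m) :=
  SimpleGraph.fromRel (fun a b =>
    (∃ i j : Fin n, a = Sum.inl i ∧ b = Sum.inl j ∧ (j : ℕ) = (i : ℕ) + 1) ∨
    (∃ (i : Fin n) (j : Fin m), a = Sum.inl i ∧ b = Sum.inr j))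

/-- The join `K_{1,n} + K̄_m`: a star with center `Sum.inl 0` and leaves
`Sum.inl i`, `i ≠ 0`, plus `m` vertices joined to all star vertices. -/
def starJoin (n m : ℕ) : SimpleGraph (Fin (n + 1) ⊕ Fin m) :=
  SimpleGraph.fromRel (fun a b =>
    (∃ i : Fin (n + 1), a = Sum.inl 0 ∧ b = Sum.inl i ∧ i ≠ 0) ∨
    (∃ (i : Fin (n + 1)) (j : Fin m), a = Sum.inl i ∧ b = Sum.inr j))

/-- The join `C_n + K̄_m`: a cycle `u_1 … u_n` plus `m` vertices joined to every `u_i`. -/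
def cycleJoin (n m : ℕ) : SimpleGraph (Fin n ⊕ Fin m) :=
  SimpleGraph.fromRel (fun a b =>
    (∃ i j : Fin n, a = Sum.inl i ∧ b = Sum.inl j ∧
      ((j : ℕ) = (i : ℕ) + 1 ∨ ((i : ℕ) = n - 1 ∧ (j : ℕ) = 0))) ∨
    (∃ (i : Fin n) (j : Fin m), a = Sum.inl i ∧ b = Sum.inr j))

/-- The join `G + K̄_m`: `G` plus `m` new vertices joined to every vertex of `G`. -/
def joinIsolated {V : Type*} (G : SimpleGraph V) (m : ℕ) : SimpleGraph (V ⊕ Fin m) :=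
  SimpleGraph.fromRel (fun a b =>
    (∃ x y : V, a = Sum.inl x ∧ b = Sum.inl y ∧ G.Adj x y) ∨
    (∃ (x : V) (j : Fin m), a = Sum.inl x ∧ b = Sum.inr j))

/-!
A super edge-magic labeling is determined by its vertex labels: `f x + f y + f(xy) = k` forces
the edge sums `f x + f y` to be pairwise distinct, and conversely a vertex labeling whose edge
sums are distinct and fill an interval extends to a super edge-magic labeling with
`f(xy) = k - f x - f y`. Edge sums of distinct labels in `{1, …, p}` lie in `{3, …, 2p - 1}`, so
a super edge-magic graph has at most `2p - 3` edges. The join `K_{1,n} + K̄_m` has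
`p = n + m + 1` and `q = n + (n + 1) m` edges, which exceeds `2p - 3` once `n, m ≥ 2`. For
`m = 1`, labeling the center `1`, the leaves `2, …, n + 1` and the added vertex `n + 2` gives the
edge sums `3, …, n + 2` on the star and `n + 3, …, 2n + 3` on the added vertex.
-/

open Set Function

section EdgeSum

variable {V : Type*}

def edgeSum (f : V → ℕ) : Sym2 V → ℕ :=
  Sym2.lift ⟨fun x y => f x + f y, fun _ _ => add_comm _ _⟩

@[simp]
lemma edgeSum_mk (f : V → ℕ) (x y : V) : edgeSum f s(x, y) = f x + f y := rfl

lemma edgeSum_mem_Icc {f : V → ℕ} (hf : Injective f) {p : ℕ} (hp : ∀ v, f v ∈ Icc 1 p)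
    {e : Sym2 V} (he : ¬e.IsDiag) : edgeSum f e ∈ Icc 3 (2 * p - 1) := by
  induction e using Sym2.ind with
  | _ x y =>
    have hxy : f x ≠ f y := hf.ne (by simpa using he)
    have := hp x
    have := hp y
    simp only [edgeSum_mk, mem_Icc] at *
    omega

variable [Fintype V] {G : SimpleGraph V}

lemma ncard_edgeSet_le_of_injOn_edgeSum {f : V → ℕ} (hf : Injective f)
    (hp : ∀ v, f v ∈ Icc 1 (Fintype.card V)) (hinj : InjOn (edgeSum f) G.edgeSet) :
    G.edgeSet.ncard ≤ 2 * Fintype.card V - 3 := by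
  have hmaps : MapsTo (edgeSum f) G.edgeSet (Icc 3 (2 * Fintype.card V - 1)) :=
    fun e he => edgeSum_mem_Icc hf hp (G.not_isDiag_of_mem_edgeSet he)
  calc G.edgeSet.ncard = (edgeSum f '' G.edgeSet).ncard := hinj.ncard_image.symm
    _ ≤ (Icc 3 (2 * Fintype.card V - 1)).ncard := ncard_le_ncard hmaps.image_subset
    _ = 2 * Fintype.card V - 3 := by rw [ncard_Icc_nat]; omega

lemma IsSEM.ncard_edgeSet_le (hG : IsSEM G) : G.edgeSet.ncard ≤ 2 * Fintype.card V - 3 := by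
  obtain ⟨k, f, g, hinj, -, hrange, hmagic⟩ := hG
  refine ncard_edgeSet_le_of_injOn_edgeSum (f := f) (hinj.comp Sum.inl_injective)
    (fun v => hrange ▸ mem_range_self v) ?_
  have hsum : ∀ e (he : e ∈ G.edgeSet), edgeSum f e + g ⟨e, he⟩ = k := by
    intro e he
    induction e using Sym2.ind with
    | _ x y => have := hmagic x y he; simp only [edgeSum_mk]; omega
  intro e₁ he₁ e₂ he₂ h
  have hg : g ⟨e₁, he₁⟩ = g ⟨e₂, he₂⟩ := by
    have := hsum e₁ he₁
    have := hsum e₂ he₂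
    omega
  exact congrArg Subtype.val (hinj.comp Sum.inr_injective hg)

lemma isSEMWith_of_image_edgeSum {f : V → ℕ} (hf : Injective f)
    (hrange : range f = Icc 1 (Fintype.card V)) {a b : ℕ}
    (hinj : InjOn (edgeSum f) G.edgeSet) (himage : edgeSum f '' G.edgeSet = Icc a b) :
    IsSEMWith G (Fintype.card V + 1 + b) := by
  set p := Fintype.card V
  have hq : G.edgeSet.ncard = b + 1 - a := by rw [← hinj.ncard_image, himage, ncard_Icc_nat]
  have hfp : ∀ v, f v ∈ Icc 1 p := fun v => hrange ▸ mem_range_self v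
  have hS : ∀ e : G.edgeSet, edgeSum f e ∈ Icc a b := fun e => himage ▸ mem_image_of_mem _ e.2
  let g : G.edgeSet → ℕ := fun e => p + 1 + b - edgeSum f e
  refine ⟨f, g, ?_, ?_, hrange, fun x y h => ?_⟩
  · rintro (v | e) (v' | e') h <;> simp only [Sum.elim_inl, Sum.elim_inr, g] at h
    · exact congrArg Sum.inl (hf h)
    · have := hfp v; have := hS e'; simp only [mem_Icc] at *; omega
    · have := hfp v'; have := hS e; simp only [mem_Icc] at *; omega
    · have := hS e; have := hS e'; simp only [mem_Icc] at *
      exact congrArg Sum.inr (Subtype.ext (hinj e.2 e'.2 (by omega)))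
  · ext l
    simp only [mem_range, Sum.exists, Sum.elim_inl, Sum.elim_inr, mem_Icc]
    constructor
    · rintro (⟨v, rfl⟩ | ⟨e, rfl⟩)
      · have := hfp v; simp only [mem_Icc] at this; omega
      · have := hS e; simp only [mem_Icc, g] at *; omega
    · rintro ⟨hl₁, hl₂⟩
      by_cases hlp : l ≤ p
      · exact Or.inl (hrange ▸ ⟨hl₁, hlp⟩ : l ∈ range f)
      · obtain ⟨e, he, hes⟩ : p + 1 + b - l ∈ edgeSum f '' G.edgeSet := by
          rw [himage]; simp only [mem_Icc]; omega
        exact Or.inr ⟨⟨e, he⟩, by simp only [g, hes]; omega⟩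
  · have := hS ⟨_, G.mem_edgeSet.mpr h⟩
    simp only [edgeSum_mk, mem_Icc, g] at *
    omega

end EdgeSum

section StarJoin

variable {n m : ℕ}

def starJoinEdge (n m : ℕ) : Fin n ⊕ (Fin (n + 1) × Fin m) → Sym2 (Fin (n + 1) ⊕ Fin m)
  | .inl i => s(.inl 0, .inl i.succ)
  | .inr (i, j) => s(.inl i, .inr j)

lemma starJoinEdge_injective : Injective (starJoinEdge n m) := by
  rintro (i | ⟨i, j⟩) (i' | ⟨i', j'⟩) h <;> simp_all [starJoinEdge, Fin.succ_ne_zero]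

lemma edgeSet_starJoin : (starJoin n m).edgeSet = range (starJoinEdge n m) := by
  refine Subset.antisymm (fun e he => ?_) (range_subset_iff.2 ?_)
  · induction e using Sym2.ind with
    | _ x y =>
      obtain ⟨-, (⟨i, rfl, rfl, hi⟩ | ⟨i, j, rfl, rfl⟩) | (⟨i, rfl, rfl, hi⟩ | ⟨i, j, rfl, rfl⟩)⟩ :=
        he
      · exact ⟨.inl (i.pred hi), by simp [starJoinEdge]⟩
      · exact ⟨.inr (i, j), rfl⟩
      · exact ⟨.inl (i.pred hi), by simp [starJoinEdge, Sym2.eq_swap]⟩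
      · exact ⟨.inr (i, j), Sym2.eq_swap⟩
  · rintro (i | ⟨i, j⟩)
    · have hi := Fin.succ_ne_zero i
      exact ⟨by simp [hi.symm], .inl (.inl ⟨i.succ, rfl, rfl, hi⟩)⟩
    · exact ⟨by simp, .inl (.inr ⟨i, j, rfl, rfl⟩)⟩

lemma ncard_edgeSet_starJoin : (starJoin n m).edgeSet.ncard = n + (n + 1) * m := by
  rw [edgeSet_starJoin, ncard_range_of_injective starJoinEdge_injective]
  simp

lemma isSEM_starJoin_one (n : ℕ) : IsSEM (starJoin n 1) := by
  let f : Fin (n + 1) ⊕ Fin 1 → ℕ := Sum.elim (fun i => i + 1) (fun _ => n + 2)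
  have hf : Injective f := by
    rintro (i | j) (i' | j') h <;> simp only [f, Sum.elim_inl, Sum.elim_inr] at h
    · exact congrArg Sum.inl (Fin.ext (by omega))
    · omega
    · omega
    · exact congrArg Sum.inr (Subsingleton.elim j j')
  have hrange : range f = Icc 1 (Fintype.card (Fin (n + 1) ⊕ Fin 1)) := by
    ext l
    simp only [Fintype.card_sum, Fintype.card_fin, mem_range, Sum.exists, mem_Icc, f,
      Sum.elim_inl, Sum.elim_inr, Fin.exists_fin_one]
    constructor
    · rintro (⟨i, rfl⟩ | rfl) <;> omega
    · rintro ⟨hl₁, hl₂⟩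
      by_cases hl : l ≤ n + 1
      · exact Or.inl ⟨⟨l - 1, by omega⟩, by simp only; omega⟩
      · exact Or.inr (by omega)
  have hsum : ∀ x, (edgeSum f ∘ starJoinEdge n 1) x = Sum.elim (fun i : Fin n => (i : ℕ) + 3)
      (fun ij : Fin (n + 1) × Fin 1 => (ij.1 : ℕ) + n + 3) x := by
    rintro (i | ⟨i, j⟩) <;>
      simp only [comp_apply, starJoinEdge, edgeSum_mk, Sum.elim_inl, Sum.elim_inr, Fin.val_zero,
        Fin.val_succ, f] <;> omega
  have hsum_inj : Injective (edgeSum f ∘ starJoinEdge n 1) := by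
    rintro (i | ⟨i, j⟩) (i' | ⟨i', j'⟩) h <;> simp only [hsum, Sum.elim_inl, Sum.elim_inr] at h
    · exact congrArg Sum.inl (Fin.ext (by omega))
    · omega
    · omega
    · rw [Fin.ext (by omega : (i : ℕ) = i'), Subsingleton.elim j j']
  have hsum_range : range (edgeSum f ∘ starJoinEdge n 1) = Icc 3 (2 * n + 3) := by
    ext s
    simp only [mem_range, hsum, Sum.exists, Sum.elim_inl, Sum.elim_inr, Prod.exists,
      Fin.exists_fin_one, mem_Icc]
    constructor
    · rintro (⟨i, rfl⟩ | ⟨i, rfl⟩) <;> omega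
    · rintro ⟨hs₁, hs₂⟩
      by_cases hs : s ≤ n + 2
      · exact Or.inl ⟨⟨s - 3, by omega⟩, by simp only; omega⟩
      · exact Or.inr ⟨⟨s - n - 3, by omega⟩, by simp only; omega⟩
  refine ⟨_, isSEMWith_of_image_edgeSum (a := 3) (b := 2 * n + 3) hf hrange ?_ ?_⟩
  · rw [edgeSet_starJoin]
    exact hsum_inj.injOn_range
  · rw [edgeSet_starJoin, ← range_comp, hsum_range]

end StarJoin

/-- for `n ≥ 2` and `m ≥ 1`, the join `K_{1,n} + K̄_m` is super
edge-magic iff `m = 1`. -/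
theorem stmt13 (n m : ℕ) (hn : 2 ≤ n) (hm : 1 ≤ m) :
    IsSEM (starJoin n m) ↔ m = 1 := by
  refine ⟨fun hSEM => ?_, fun hm₁ => hm₁ ▸ isSEM_starJoin_one n⟩
  have hq := hSEM.ncard_edgeSet_le
  rw [ncard_edgeSet_starJoin, Fintype.card_sum, Fintype.card_fin, Fintype.card_fin,
    add_one_mul] at hq
  by_contra hm₁
  have : 2 * m ≤ n * m := Nat.mul_le_mul_right m hn
  have : n * 2 ≤ n * m := Nat.mul_le_mul_left n (by omega)
  omega
end

section
/- For every integer m ≥ 1, the join P_2 + K̄_m is super edge-magic with magic constant 3m + 6. -/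
open SimpleGraph

/-! A bijection `f : V → {1, …, p}` whose edge sums `f x + f y` are `q` consecutive integers
`s, …, s + q - 1` extends to a super edge-magic labeling with magic constant `p + q + s`: the
edge `xy` gets the label `p + q + s - (f x + f y)`, and these labels fill `{p + 1, …, p + q}`.

For `P₂ + K̄_m` label `u₁ ↦ 1`, `u₂ ↦ m + 2`, `v_j ↦ j + 1` (here `v_j` is `Sum.inr (j - 1)`,
so `Sum.inr j ↦ j + 2`). The edge sums are then `3, …, m + 2` on the edges at `u₁`, `m + 3`
on `u₁u₂`, and `m + 4, …, 2m + 3` on the edges at `u₂`, so `s = 3`, `q = 2m + 1` and the magic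
constant is `(m + 2) + (2m + 1) + 3 = 3m + 6`. -/

namespace SimpleGraph

def edgeSum {V : Type*} (f : V → ℕ) : Sym2 V → ℕ :=
  Sym2.lift ⟨fun a b => f a + f b, fun _ _ => add_comm _ _⟩

@[simp]
theorem edgeSum_mk {V : Type*} (f : V → ℕ) (a b : V) : edgeSum f s(a, b) = f a + f b := rfl

theorem isSEMWith_of_bijOn_edgeSum {V : Type*} [Fintype V] (G : SimpleGraph V) {f : V → ℕ}
    (hf : Function.Injective f) (hf_range : Set.range f = Set.Icc 1 (Fintype.card V)) {s q : ℕ}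
    (hsum : Set.BijOn (edgeSum f) G.edgeSet (Set.Ico s (s + q))) :
    IsSEMWith G (Fintype.card V + q + s) := by
  set p := Fintype.card V
  have hq : G.edgeSet.ncard = q := by
    rw [hsum.ncard_eq, ← Finset.coe_Ico, Set.ncard_coe_finset, Nat.card_Ico,
      Nat.add_sub_cancel_left]
  have hf_le (x : V) : 1 ≤ f x ∧ f x ≤ p := by
    simpa only [hf_range, Set.mem_Icc] using Set.mem_range_self (f := f) x
  have hsum_mem (e : G.edgeSet) : s ≤ edgeSum f e ∧ edgeSum f e < s + q := hsum.mapsTo e.2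
  let g (e : G.edgeSet) : ℕ := p + q + s - edgeSum f e
  have hg_range : Set.range g = Set.Icc (p + 1) (p + q) := by
    ext n
    constructor
    · rintro ⟨e, rfl⟩
      have := hsum_mem e
      simp only [g]
      exact ⟨by omega, by omega⟩
    · rintro ⟨h₁, h₂⟩
      have hn : p + q + s - n ∈ Set.Ico s (s + q) := ⟨by omega, by omega⟩
      obtain ⟨e, he, hen⟩ := hsum.surjOn hn
      exact ⟨⟨e, he⟩, by simp only [g, hen]; omega⟩
  refine ⟨f, g, ?_, ?_, hf_range, fun x y hxy => ?_⟩
  · rintro (x | e) (y | e') h <;> simp only [Sum.elim_inl, Sum.elim_inr, g] at h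
    · exact congrArg _ (hf h)
    · have := hf_le x; have := hsum_mem e'; omega
    · have := hf_le y; have := hsum_mem e; omega
    · have := hsum_mem e; have := hsum_mem e'
      exact congrArg _ (Subtype.ext (hsum.injOn e.2 e'.2 (by omega)))
  · ext n
    rw [Set.Sum.elim_range, hf_range, hg_range, hq]
    simp only [Set.mem_union, Set.mem_Icc]
    omega
  · have := hsum_mem ⟨s(x, y), G.mem_edgeSet.mpr hxy⟩
    simp only [g, edgeSum_mk] at this ⊢
    omega

theorem mem_edgeSet_pathJoin_two {m : ℕ} {e : Sym2 (Fin 2 ⊕ Fin m)} :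
    e ∈ (pathJoin 2 m).edgeSet ↔
      e = s(Sum.inl 0, Sum.inl 1) ∨ ∃ (i : Fin 2) (j : Fin m), e = s(Sum.inl i, Sum.inr j) := by
  induction e using Sym2.ind with
  | _ a b =>
    rw [mem_edgeSet, pathJoin, fromRel_adj]
    constructor
    · rintro ⟨-, (⟨i, j, rfl, rfl, hij⟩ | ⟨i, j, rfl, rfl⟩) |
        (⟨i, j, rfl, rfl, hij⟩ | ⟨i, j, rfl, rfl⟩)⟩
      · fin_cases i <;> fin_cases j <;> simp_all
      · exact Or.inr ⟨i, j, rfl⟩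
      · fin_cases i <;> fin_cases j <;> simp_all [Sym2.eq_swap]
      · exact Or.inr ⟨i, j, Sym2.eq_swap⟩
    · rintro (h | ⟨i, j, h⟩) <;>
        rcases Sym2.eq_iff.mp h with ⟨rfl, rfl⟩ | ⟨rfl, rfl⟩ <;> simp

def pathJoinTwoLabel (m : ℕ) : Fin 2 ⊕ Fin m → ℕ :=
  Sum.elim ![1, m + 2] fun j => j + 2

theorem pathJoinTwoLabel_injective (m : ℕ) : Function.Injective (pathJoinTwoLabel m) := by
  rintro (i | j) (i' | j') h <;> simp only [pathJoinTwoLabel, Sum.elim_inl, Sum.elim_inr] at h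
  · fin_cases i <;> fin_cases i' <;> simp_all
  · fin_cases i <;> simp at h
    omega
  · fin_cases i' <;> simp at h
    omega
  · exact congrArg _ (Fin.ext (by omega))

theorem range_pathJoinTwoLabel (m : ℕ) :
    Set.range (pathJoinTwoLabel m) = Set.Icc 1 (m + 2) := by
  ext n
  simp only [Set.mem_range, Set.mem_Icc, Sum.exists, pathJoinTwoLabel, Sum.elim_inl, Sum.elim_inr,
    Fin.exists_fin_two, Matrix.cons_val_zero, Matrix.cons_val_one]
  constructor
  · rintro ((h | h) | ⟨j, h⟩) <;> omega
  · rintro ⟨h₁, h₂⟩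
    by_cases hn : n = 1 ∨ n = m + 2
    · omega
    · exact Or.inr ⟨⟨n - 2, by omega⟩, by simp only; omega⟩

theorem bijOn_edgeSum_pathJoinTwoLabel (m : ℕ) :
    Set.BijOn (edgeSum (pathJoinTwoLabel m)) (pathJoin 2 m).edgeSet
      (Set.Ico 3 (3 + (2 * m + 1))) := by
  refine Set.BijOn.mk ?_ ?_ ?_
  · intro e he
    rcases mem_edgeSet_pathJoin_two.mp he with rfl | ⟨i, j, rfl⟩
    · simp [pathJoinTwoLabel]; omega
    · fin_cases i <;> simp [pathJoinTwoLabel] <;> omega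
  · intro e he e' he' h
    rcases mem_edgeSet_pathJoin_two.mp he with rfl | ⟨i, j, rfl⟩ <;>
      rcases mem_edgeSet_pathJoin_two.mp he' with rfl | ⟨i', j', rfl⟩
    · rfl
    · fin_cases i' <;> simp [pathJoinTwoLabel] at h <;> omega
    · fin_cases i <;> simp [pathJoinTwoLabel] at h <;> omega
    · fin_cases i <;> fin_cases i' <;> simp [pathJoinTwoLabel, Fin.ext_iff] at h ⊢ <;> omega
  · rintro t ⟨ht₁, ht₂⟩
    simp only [Set.mem_image, mem_edgeSet_pathJoin_two]
    rcases lt_trichotomy t (m + 3) with ht | rfl | ht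
    · exact ⟨s(Sum.inl 0, Sum.inr ⟨t - 3, by omega⟩), Or.inr ⟨0, _, rfl⟩,
        by simp [pathJoinTwoLabel]; omega⟩
    · exact ⟨s(Sum.inl 0, Sum.inl 1), Or.inl rfl, by simp [pathJoinTwoLabel]; omega⟩
    · exact ⟨s(Sum.inl 1, Sum.inr ⟨t - (m + 4), by omega⟩), Or.inr ⟨1, _, rfl⟩,
        by simp [pathJoinTwoLabel]; omega⟩

end SimpleGraph

theorem stmt18_general (m : ℕ) : IsSEMWith (pathJoin 2 m) (3 * m + 6) := by
  have hcard : Fintype.card (Fin 2 ⊕ Fin m) = m + 2 := by simp [add_comm]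
  have h := isSEMWith_of_bijOn_edgeSum (pathJoin 2 m) (pathJoinTwoLabel_injective m)
    (hcard ▸ range_pathJoinTwoLabel m) (bijOn_edgeSum_pathJoinTwoLabel m)
  rwa [hcard, show m + 2 + (2 * m + 1) + 3 = 3 * m + 6 by ring] at h

/-- for every `m ≥ 1`, `P₂ + K̄_m` is super edge-magic with magic
constant `3m + 6`. -/
theorem stmt18 (m : ℕ) (hm : 1 ≤ m) : IsSEMWith (pathJoin 2 m) (3 * m + 6) :=
  stmt18_general m
end
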